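/- arXiv:1909.06292 — 3 statements merged into one kernel-verified Lean document; each statement's English description precedes it below -/
import Mathlib

section
/- If C is a clique in a graph G and C' ⊆ C is avg-c-isolated (i.e., the sum over v in C' of the number of edges from v to vertices outside C' is strictly less than c·|C'|), then |C'| > δ(C) − c + 1, where δ(C) is the minimum degree in G over vertices of C. -/
open Finset
open scoped Classical

variable {V : Type*} [Fintype V] [DecidableEq V]

/-- Number of neighbors of `v` in `G` lying outside `A`. -/
noncomputable def outdeg (G : SimpleGraph V) (v : V) (A : Finset V) : ℕ :=
  (Finset.univ.filter fun u => G.Adj v u ∧ u ∉ A).card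

/-- Degree of `v` in `G`. -/
noncomputable def deg (G : SimpleGraph V) (v : V) : ℕ :=
  (Finset.univ.filter fun u => G.Adj v u).card

/-- Minimum degree over the vertices of a nonempty set `C`. -/
noncomputable def minDeg (G : SimpleGraph V) (C : Finset V) (hC : C.Nonempty) : ℕ :=
  C.inf' hC fun v => deg G v

/-- Edge-wise intersection of the layers `G a, …, G b`. -/
def interGraph (G : ℕ → SimpleGraph V) (a b : ℕ) : SimpleGraph V where
  Adj u v := u ≠ v ∧ ∀ i ∈ Finset.Icc a b, (G i).Adj u v
  symm := ⟨fun u v h => ⟨h.1.symm, fun i hi => (h.2 i hi).symm⟩⟩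
  loopless := ⟨fun v h => h.1 rfl⟩

/-- Edge-wise union of the layers `G a, …, G b`. -/
def unionGraph (G : ℕ → SimpleGraph V) (a b : ℕ) : SimpleGraph V where
  Adj u v := ∃ i ∈ Finset.Icc a b, (G i).Adj u v
  symm := ⟨fun u v h => ⟨h.choose, h.choose_spec.1, h.choose_spec.2.symm⟩⟩
  loopless := ⟨fun v h => (G h.choose).loopless.irrefl v h.choose_spec.2⟩
/-! Some vertex `v` of `C'` has fewer than `c` neighbours outside `C'` (averaging), and `v` has at
most `|C'| - 1` neighbours inside `C'`; hence `δ(C) ≤ deg v < |C'| - 1 + c`. -/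

theorem deg_add_one_le_card_add_outdeg (G : SimpleGraph V) {A : Finset V} {v : V} (hv : v ∈ A) :
    deg G v + 1 ≤ A.card + outdeg G v A := by
  have hinside : (univ.filter fun u => G.Adj v u ∧ u ∈ A) ⊆ A.erase v := fun u hu => by
    simp only [mem_filter, mem_univ, true_and] at hu
    exact mem_erase.2 ⟨hu.1.ne.symm, hu.2⟩
  have hinside_card := card_le_card hinside
  rw [card_erase_of_mem hv] at hinside_card
  have hsplit := card_filter_add_card_filter_not (s := univ.filter fun u => G.Adj v u) (· ∈ A)
  simp only [filter_filter] at hsplit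
  have hA_pos := card_pos.2 ⟨v, hv⟩
  unfold deg outdeg
  omega

theorem stmt0_general (G : SimpleGraph V) (c : ℚ)
    (C C' : Finset V) (hC : C.Nonempty)
    (hsub : C' ⊆ C)
    (hiso : (∑ v ∈ C', (outdeg G v C' : ℚ)) < c * C'.card) :
    (C'.card : ℚ) > (minDeg G C hC : ℚ) - c + 1 := by
  obtain ⟨v, hv, hv_outdeg⟩ : ∃ v ∈ C', (outdeg G v C' : ℚ) < c :=
    exists_lt_of_sum_lt (by simpa [mul_comm] using hiso)
  have hdeg : (deg G v : ℚ) + 1 ≤ C'.card + outdeg G v C' := by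
    exact_mod_cast deg_add_one_le_card_add_outdeg G hv
  have hmin : (minDeg G C hC : ℚ) ≤ deg G v := by
    exact_mod_cast inf'_le _ (hsub hv)
  linarith

theorem stmt0 (G : SimpleGraph V) (c : ℚ) (hc : 0 < c)
    (C C' : Finset V) (hC : C.Nonempty)
    (hclique : G.IsClique (C : Set V)) (hsub : C' ⊆ C)
    (hiso : (∑ v ∈ C', (outdeg G v C' : ℚ)) < c * C'.card) :
    (C'.card : ℚ) > (minDeg G C hC : ℚ) - c + 1 :=
  stmt0_general G c C C' hC hsub hiso
end

section
/- Let G_1, …, G_t be graphs on a common vertex set, G_∩ their intersection, C a clique in G_∩, and C' ⊆ C a vertex-maximal usually-avg-c-isolated subset. Let C̃ ⊆ C consist of ⌊δ_{G_∩}(C) − c + 2⌋ vertices v with the smallest values of Σ_{i=1}^t deg_{G_i}(v). Then C̃ ⊆ C'. -/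
/-!
Write `D v = ∑ i, deg_{G_i} v`. Inside a set `S` that is a clique in every layer,
`outdeg_{G_i}(v, S) = deg_{G_i} v - (|S| - 1)`, so `S` is usually-avg-`c`-isolated iff
`∑_{v ∈ S} D v < t |S| (c + |S| - 1)`. If a vertex `v ∈ C̃` were missing from `C'`, comparing this
criterion for `C'` and for the non-isolated `C' ∪ {v}` gives `D v > t (c + 2 |C'|)`. Every vertex
of `C' \ C̃` has `D ≥ D v`, and the at most `|C̃| - 1 ≤ δ - c + 1` vertices of `C' ∩ C̃` have
`D ≥ t δ`; summing over `C'` overshoots the isolation bound of `C'` by `t (k² + k) ≥ 0`, where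
`k = |C' \ C̃|`.
-/

open Finset
open scoped Classical

variable {V : Type*} [Fintype V] [DecidableEq V]

/-- `S` is usually-avg-`c`-isolated over the layers `G 1, …, G t`. -/
def UsuallyAvgIsolated (G : ℕ → SimpleGraph V) (t : ℕ) (c : ℚ) (S : Finset V) : Prop :=
  (∑ i ∈ Finset.Icc 1 t, ∑ v ∈ S, (outdeg (G i) v S : ℚ)) < c * S.card * t

lemma outdeg_add_card_filter_adj (G : SimpleGraph V) (v : V) (A : Finset V) :
    outdeg G v A + #{u ∈ A | G.Adj v u} = deg G v := by
  have hnbr : {u ∈ A | G.Adj v u} = {u ∈ univ.filter (G.Adj v) | u ∈ A} := by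
    ext u
    simp [and_comm]
  rw [outdeg, deg, hnbr, ← filter_filter, add_comm]
  exact card_filter_add_card_filter_not _

lemma outdeg_add_card_of_isClique {G : SimpleGraph V} {S : Finset V}
    (hS : G.IsClique (S : Set V)) {v : V} (hv : v ∈ S) :
    outdeg G v S + #S = deg G v + 1 := by
  have hnbr : {u ∈ S | G.Adj v u} = S.erase v := by
    ext u
    simp only [mem_filter, mem_erase]
    exact ⟨fun h => ⟨(G.ne_of_adj h.2).symm, h.1⟩, fun h => ⟨h.2, hS hv h.2 (Ne.symm h.1)⟩⟩
  rw [← outdeg_add_card_filter_adj G v S, hnbr, add_assoc, card_erase_add_one hv]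

noncomputable def degSum (G : ℕ → SimpleGraph V) (t : ℕ) (v : V) : ℚ :=
  ∑ i ∈ Icc 1 t, (deg (G i) v : ℚ)

lemma usuallyAvgIsolated_iff_of_isClique {G : ℕ → SimpleGraph V} {t : ℕ} {c : ℚ} {S : Finset V}
    (hS : ∀ i ∈ Icc 1 t, (G i).IsClique (S : Set V)) :
    UsuallyAvgIsolated G t c S ↔ ∑ v ∈ S, degSum G t v < t * #S * (c + #S - 1) := by
  have hsum :=
    calc ∑ i ∈ Icc 1 t, ∑ v ∈ S, (outdeg (G i) v S : ℚ)
        = ∑ i ∈ Icc 1 t, ∑ v ∈ S, ((deg (G i) v : ℚ) - (#S - 1)) := by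
          refine sum_congr rfl fun i hi => sum_congr rfl fun v hv => ?_
          have := outdeg_add_card_of_isClique (hS i hi) hv
          have : (outdeg (G i) v S : ℚ) + #S = deg (G i) v + 1 := by exact_mod_cast this
          linarith
      _ = ∑ v ∈ S, degSum G t v - t * #S * (#S - 1) := by
          simp only [sum_sub_distrib, sum_const, nsmul_eq_mul, Nat.card_Icc, degSum]
          rw [sum_comm]
          push_cast
          ring
  rw [UsuallyAvgIsolated, hsum]
  constructor <;> intro h <;> linarith

omit [Fintype V] [DecidableEq V] in
lemma interGraph_le (G : ℕ → SimpleGraph V) {a b i : ℕ} (hi : i ∈ Icc a b) :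
    interGraph G a b ≤ G i :=
  fun _ _ h => h.2 i hi

omit [DecidableEq V] in
lemma deg_mono {G H : SimpleGraph V} (h : G ≤ H) (v : V) : deg G v ≤ deg H v :=
  card_le_card fun _ hu => by
    simp only [mem_filter] at hu ⊢
    exact ⟨hu.1, h hu.2⟩

omit [DecidableEq V] in
lemma mul_minDeg_le_degSum (G : ℕ → SimpleGraph V) (t : ℕ) {C : Finset V} (hC : C.Nonempty)
    {v : V} (hv : v ∈ C) :
    t * (minDeg (interGraph G 1 t) C hC : ℚ) ≤ degSum G t v := by
  have := card_nsmul_le_sum (Icc 1 t) (fun i => (deg (G i) v : ℚ)) _ fun i hi =>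
    Nat.cast_le.2 ((inf'_le _ hv).trans (deg_mono (interGraph_le G hi) v))
  rwa [Nat.card_Icc, Nat.add_sub_cancel, nsmul_eq_mul] at this

lemma degSum_gt_of_not_usuallyAvgIsolated_insert {G : ℕ → SimpleGraph V} {t : ℕ} {c : ℚ}
    {S : Finset V} {v : V}
    (hclique : ∀ i ∈ Icc 1 t, (G i).IsClique ((insert v S : Finset V) : Set V)) (hv : v ∉ S)
    (hS : UsuallyAvgIsolated G t c S) (hvS : ¬ UsuallyAvgIsolated G t c (insert v S)) :
    t * (c + 2 * #S) < degSum G t v := by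
  rw [usuallyAvgIsolated_iff_of_isClique fun i hi => (hclique i hi).subset (by simp)] at hS
  rw [usuallyAvgIsolated_iff_of_isClique hclique, sum_insert hv, card_insert_of_notMem hv,
    not_lt] at hvS
  push_cast at hvS
  linarith

lemma card_inter_nsmul_add_card_sdiff_nsmul_le_sum {ι M : Type*} [DecidableEq ι]
    [AddCommMonoid M] [PartialOrder M] [IsOrderedAddMonoid M] {s u : Finset ι} {f : ι → M}
    {x y : M} (hx : ∀ i ∈ s ∩ u, x ≤ f i) (hy : ∀ i ∈ s \ u, y ≤ f i) :
    #(s ∩ u) • x + #(s \ u) • y ≤ ∑ i ∈ s, f i := by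
  rw [← sum_inter_add_sum_sdiff s u]
  exact add_le_add (card_nsmul_le_sum _ _ _ hx) (card_nsmul_le_sum _ _ _ hy)

theorem stmt3_general (G : ℕ → SimpleGraph V) (t : ℕ) (c : ℚ)
    (C C' Ct : Finset V) (hC : C.Nonempty)
    (hclique : (interGraph G 1 t).IsClique (C : Set V)) (hsub : C' ⊆ C)
    (hiso : UsuallyAvgIsolated G t c C')
    (hmax : ∀ C'' : Finset V, C' ⊂ C'' → C'' ⊆ C → ¬ UsuallyAvgIsolated G t c C'')
    (hCtsub : Ct ⊆ C)
    (hCtcard : (Ct.card : ℤ) = ⌊(minDeg (interGraph G 1 t) C hC : ℚ) - c + 2⌋)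
    (hCtmin : ∀ u ∈ Ct, ∀ v ∈ C \ Ct,
      (∑ i ∈ Finset.Icc 1 t, (deg (G i) u : ℚ)) ≤ ∑ i ∈ Finset.Icc 1 t, (deg (G i) v : ℚ)) :
    Ct ⊆ C' := by
  intro v hvCt
  by_contra hvC'
  have hv : v ∈ C := hCtsub hvCt
  have hcliques : ∀ i ∈ Icc 1 t, (G i).IsClique ((insert v C' : Finset V) : Set V) :=
    fun i hi => (hclique.mono (interGraph_le G hi)).subset (coe_subset.2 (insert_subset hv hsub))
  have hDv := degSum_gt_of_not_usuallyAvgIsolated_insert hcliques hvC' hiso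
    (hmax _ (ssubset_insert hvC') (insert_subset hv hsub))
  rw [usuallyAvgIsolated_iff_of_isClique fun i hi => (hcliques i hi).subset (by simp)] at hiso
  set δ : ℚ := (minDeg (interGraph G 1 t) C hC : ℚ)
  have hδ : (#Ct : ℚ) ≤ δ - c + 2 := by
    have := Int.floor_le (δ - c + 2)
    rw [← hCtcard] at this
    exact_mod_cast this
  have hlow := card_inter_nsmul_add_card_sdiff_nsmul_le_sum (f := degSum G t)
    (y := degSum G t v) (fun u hu => mul_minDeg_le_degSum G t hC (hsub (mem_inter.1 hu).1))
    (fun u hu => hCtmin v hvCt u (sdiff_subset_sdiff hsub subset_rfl hu))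
  have hA : (#(C' ∩ Ct) : ℚ) + 1 ≤ #Ct := by
    exact_mod_cast card_lt_card ⟨inter_subset_right, fun h => hvC' (mem_inter.1 (h hvCt)).1⟩
  have hcard : (#C' : ℚ) = #(C' ∩ Ct) + #(C' \ Ct) := by
    exact_mod_cast (card_inter_add_card_sdiff C' Ct).symm
  rw [nsmul_eq_mul, nsmul_eq_mul] at hlow
  rw [hcard] at hiso hDv
  have ha : (0 : ℚ) ≤ #(C' ∩ Ct) := by positivity
  have hk : (0 : ℚ) ≤ #(C' \ Ct) := by positivity
  set a : ℚ := (#(C' ∩ Ct) : ℚ)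
  set k : ℚ := (#(C' \ Ct) : ℚ)
  -- the bounds give `∑ u ∈ C', degSum G t u ≥ t * a * (a + c - 1) + t * k * (c + 2 * (a + k))`,
  -- which exceeds the isolation bound `t * (a + k) * (c + a + k - 1)` by `t * (k ^ 2 + k) ≥ 0`
  linarith [mul_nonneg (mul_nonneg ha t.cast_nonneg) (by linarith : 0 ≤ δ - (a + c - 1)),
    mul_nonneg hk (by linarith : 0 ≤ degSum G t v - t * (c + 2 * (a + k))),
    mul_nonneg t.cast_nonneg (by positivity : (0 : ℚ) ≤ k ^ 2 + k)]

theorem stmt3 (G : ℕ → SimpleGraph V) (t : ℕ) (ht : 1 ≤ t) (c : ℚ) (hc : 0 < c)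
    (C C' Ct : Finset V) (hC : C.Nonempty)
    (hclique : (interGraph G 1 t).IsClique (C : Set V)) (hsub : C' ⊆ C)
    (hiso : UsuallyAvgIsolated G t c C')
    (hmax : ∀ C'' : Finset V, C' ⊂ C'' → C'' ⊆ C → ¬ UsuallyAvgIsolated G t c C'')
    (hCtsub : Ct ⊆ C)
    (hCtcard : (Ct.card : ℤ) = ⌊(minDeg (interGraph G 1 t) C hC : ℚ) - c + 2⌋)
    (hCtmin : ∀ u ∈ Ct, ∀ v ∈ C \ Ct,
      (∑ i ∈ Finset.Icc 1 t, (deg (G i) u : ℚ)) ≤ ∑ i ∈ Finset.Icc 1 t, (deg (G i) v : ℚ)) :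
    Ct ⊆ C' :=
  stmt3_general G t c C C' Ct hC hclique hsub hiso hmax hCtsub hCtcard hCtmin
end

section
/- Let C be a clique in a graph G. If C' ⊆ C is a vertex-maximal avg-c-isolated subset of C, then C' contains all v ∈ C with deg_G(v) ≤ δ(C) + |C'| + 1. -/
open Finset
open scoped Classical

variable {V : Type*} [Fintype V] [DecidableEq V]

/-- `S` is avg-`c`-isolated in `G`. -/
def AvgIsolated (G : SimpleGraph V) (c : ℚ) (S : Finset V) : Prop :=
  (∑ v ∈ S, (outdeg G v S : ℚ)) < c * S.card

theorem stmt19 (G : SimpleGraph V) (c : ℚ) (hc : 0 < c)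
    (C C' : Finset V) (hC : C.Nonempty)
    (hclique : G.IsClique (C : Set V)) (hsub : C' ⊆ C)
    (hiso : AvgIsolated G c C')
    (hmax : ∀ C'' : Finset V, C' ⊂ C'' → C'' ⊆ C → ¬ AvgIsolated G c C'') :
    ∀ v ∈ C, (deg G v : ℚ) ≤ (minDeg G C hC : ℚ) + C'.card + 1 → v ∈ C' := by
  intro v hvC hdeg
  by_contra hv
  have hne : C'.Nonempty := by
    rcases C'.eq_empty_or_nonempty with h | h
    · exfalso; rw [h] at hiso
      simp [AvgIsolated] at hiso
    · exact h
  have hadj : ∀ u ∈ C', G.Adj v u := fun u hu =>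
    hclique hvC (hsub hu) (fun h => hv (h ▸ hu))
  have hss : C' ⊂ insert v C' := Finset.ssubset_insert hv
  have hSC : insert v C' ⊆ C := Finset.insert_subset hvC hsub
  refine absurd ?_ (hmax (insert v C') hss hSC)
  set n : ℚ := (C'.card : ℚ) with hn
  have hn1 : (1 : ℚ) ≤ n := by
    rw [hn]; exact_mod_cast Finset.one_le_card.mpr hne
  -- h1 : outdeg within insert drops by 1 for u ∈ C'
  have h1 : ∀ u ∈ C', (outdeg G u (insert v C') : ℚ) = (outdeg G u C' : ℚ) - 1 := by
    intro u hu
    have hadjuv : G.Adj u v := (hadj u hu).symm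
    have hset : (Finset.univ.filter fun w => G.Adj u w ∧ w ∉ insert v C')
        = (Finset.univ.filter fun w => G.Adj u w ∧ w ∉ C').erase v := by
      ext w
      simp only [Finset.mem_filter, Finset.mem_erase, Finset.mem_insert, Finset.mem_univ,
        true_and, not_or]
      tauto
    have hvmem : v ∈ Finset.univ.filter fun w => G.Adj u w ∧ w ∉ C' := by
      simp [hadjuv, hv]
    have := Finset.card_erase_of_mem hvmem
    unfold outdeg
    rw [hset, this]
    have hpos : 1 ≤ (Finset.univ.filter fun w => G.Adj u w ∧ w ∉ C').card :=
      Finset.card_pos.mpr ⟨v, hvmem⟩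
    push_cast [Nat.cast_sub hpos]
    ring
  -- h2 : outdeg of v in insert
  have h2 : (outdeg G v (insert v C') : ℚ) = (deg G v : ℚ) - n := by
    have hset : (Finset.univ.filter fun w => G.Adj v w)
        = (Finset.univ.filter fun w => G.Adj v w ∧ w ∉ insert v C') ∪ C' := by
      ext w
      simp only [Finset.mem_filter, Finset.mem_union, Finset.mem_insert, Finset.mem_univ,
        true_and, not_or]
      constructor
      · intro hw
        by_cases hwC : w ∈ C'
        · exact Or.inr hwC
        · exact Or.inl ⟨hw, fun h => G.loopless.irrefl v (h ▸ hw), hwC⟩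
      · rintro (⟨hw, _, _⟩ | hw)
        · exact hw
        · exact hadj w hw
    have hdisj : Disjoint (Finset.univ.filter fun w => G.Adj v w ∧ w ∉ insert v C') C' := by
      rw [Finset.disjoint_left]
      intro w hw hwC
      simp only [Finset.mem_filter, Finset.mem_insert, not_or] at hw
      exact hw.2.2.2 hwC
    have : deg G v = outdeg G v (insert v C') + C'.card := by
      unfold deg outdeg
      rw [hset, Finset.card_union_of_disjoint hdisj]
    rw [this]; push_cast; ring
  -- h3 : deg lower bound via outdeg
  have h3 : ∀ u ∈ C', (deg G u : ℚ) + 1 ≤ (outdeg G u C' : ℚ) + n := by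
    intro u hu
    have hsplit : (Finset.univ.filter fun w => G.Adj u w)
        ⊆ (Finset.univ.filter fun w => G.Adj u w ∧ w ∉ C') ∪ C'.erase u := by
      intro w hw
      simp only [Finset.mem_filter, Finset.mem_union, Finset.mem_erase, Finset.mem_univ,
        true_and] at *
      by_cases hwC : w ∈ C'
      · exact Or.inr ⟨fun h => G.loopless.irrefl u (h ▸ hw), hwC⟩
      · exact Or.inl ⟨hw, hwC⟩
    have hcard : deg G u ≤ outdeg G u C' + (C'.erase u).card := by
      unfold deg outdeg
      exact le_trans (Finset.card_le_card hsplit) (Finset.card_union_le _ _)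
    have herase : ((C'.erase u).card : ℚ) = n - 1 := by
      rw [Finset.card_erase_of_mem hu]
      push_cast [Nat.cast_sub (Finset.one_le_card.mpr ⟨u, hu⟩)]
      ring
    have := (Nat.cast_le (α := ℚ)).mpr hcard
    push_cast at this
    linarith
  have hδ : ∀ u ∈ C', (minDeg G C hC : ℚ) ≤ (deg G u : ℚ) := by
    intro u hu
    exact_mod_cast Finset.inf'_le _ (hsub hu)
  -- from hiso : ∑ < c * n, derive minDeg bound
  have hsumlb : n * ((minDeg G C hC : ℚ) + 1 - n) ≤ ∑ u ∈ C', (outdeg G u C' : ℚ) := by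
    have : ∀ u ∈ C', (minDeg G C hC : ℚ) + 1 - n ≤ (outdeg G u C' : ℚ) := by
      intro u hu
      have := h3 u hu
      have := hδ u hu
      linarith
    calc n * ((minDeg G C hC : ℚ) + 1 - n)
        = ∑ _u ∈ C', ((minDeg G C hC : ℚ) + 1 - n) := by
          rw [Finset.sum_const, nsmul_eq_mul]
      _ ≤ ∑ u ∈ C', (outdeg G u C' : ℚ) := Finset.sum_le_sum this
  have hisoq : ∑ u ∈ C', (outdeg G u C' : ℚ) < c * n := hiso
  have hδc : (minDeg G C hC : ℚ) + 1 - n < c := by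
    nlinarith [hn1, hsumlb, hisoq]
  -- conclude
  unfold AvgIsolated
  rw [Finset.sum_insert hv, Finset.sum_congr rfl h1, h2]
  have hcard : ((insert v C').card : ℚ) = n + 1 := by
    rw [Finset.card_insert_of_notMem hv]; push_cast; ring
  rw [hcard]
  have hsum : ∑ u ∈ C', ((outdeg G u C' : ℚ) - 1) = (∑ u ∈ C', (outdeg G u C' : ℚ)) - n := by
    rw [Finset.sum_sub_distrib, Finset.sum_const, nsmul_eq_mul]; ring
  rw [hsum]
  nlinarith [hdeg, hδc, hisoq, hn1]
end
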